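/- For every n ≥ 3, the distinguishing number of the lexicographic product of the spider graph G_n with the complete graph K_2 equals ⌈(1 + √(1 + 8√n))/2⌉, i.e. D(G_n[K_2]) is the least integer r such that (r(r−1)/2)^2 ≥ n. -/

import Mathlib

open SimpleGraph

/-- The lexicographic product of two simple graphs. -/
def lexProd {V W : Type*} (G : SimpleGraph V) (H : SimpleGraph W) :
    SimpleGraph (V × W) where
  Adj p q := G.Adj p.1 q.1 ∨ (p.1 = q.1 ∧ H.Adj p.2 q.2)
  symm := by
    refine ⟨?_⟩
    rintro p q (h | ⟨h1, h2⟩)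
    · exact Or.inl h.symm
    · exact Or.inr ⟨h1.symm, h2.symm⟩
  loopless := by
    refine ⟨?_⟩
    rintro p (h | ⟨_, h⟩)
    · exact G.ne_of_adj h rfl
    · exact H.ne_of_adj h rfl

/-- The distinguishing number: the least `d` such that there is a vertex labeling with `d`
labels preserved only by the identity automorphism. -/
noncomputable def distinguishingNumber {V : Type*} (G : SimpleGraph V) : ℕ :=
  sInf {d : ℕ | ∃ φ : V → Fin d,
    ∀ σ : G ≃g G, (∀ v, φ (σ v) = φ v) → ∀ v, σ v = v}

/-- The distinguishing index: the least `d` such that there is an edge labeling with `d`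
labels preserved only by the identity automorphism. -/
noncomputable def distinguishingIndex {V : Type*} (G : SimpleGraph V) : ℕ :=
  sInf {d : ℕ | ∃ ψ : G.edgeSet → Fin d,
    ∀ σ : G ≃g G, (∀ e, ψ (σ.mapEdgeSet e) = ψ e) → ∀ v, σ v = v}

/-- Every automorphism of `G[H]` is of wreath form, i.e. `Aut(G[H]) = Aut(G)[Aut(H)]`. -/
def wreathForm {V W : Type*} (G : SimpleGraph V) (H : SimpleGraph W) : Prop :=
  ∀ f : lexProd G H ≃g lexProd G H,
    ∃ (α : G ≃g G) (β : V → (H ≃g H)),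
      ∀ p : V × W, f p = (α p.1, β (α p.1) p.2)
/-- The spider graph: the star `K_{1,n}` with every edge subdivided. -/
def spider (n : ℕ) : SimpleGraph (Unit ⊕ Fin n ⊕ Fin n) :=
  SimpleGraph.fromRel (fun a b =>
    (∃ i : Fin n, a = Sum.inl () ∧ b = Sum.inr (Sum.inl i)) ∨
    (∃ i : Fin n, a = Sum.inr (Sum.inl i) ∧ b = Sum.inr (Sum.inr i)))


/-!
The spider `G_n` has no two vertices with the same closed neighbourhood, so every automorphism
of `G_n[K_2]` maps `K_2`-fibres onto `K_2`-fibres along an automorphism of `G_n`; for `n ≥ 2` the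
automorphisms of `G_n` are the permutations of its legs. Hence a labelling of `G_n[K_2]` is
distinguishing iff it takes two different values on every fibre and no two legs carry the same
pair (label set of the middle fibre, label set of the pendant fibre). With `d` labels there are
`(d (d - 1) / 2) ^ 2` such pairs of `2`-subsets.
-/

namespace Sym2

theorem exists_perm_of_mk_eq {L : Type*} {f g : Fin 2 → L} (h : s(f 0, f 1) = s(g 0, g 1)) :
    ∃ e : Equiv.Perm (Fin 2), ∀ x, g (e x) = f x := by
  rcases Sym2.eq_iff.mp h with ⟨h0, h1⟩ | ⟨h0, h1⟩
  · exact ⟨1, by simp [Fin.forall_fin_two, h0, h1]⟩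
  · exact ⟨Equiv.swap 0 1, by simp [Fin.forall_fin_two, h0, h1]⟩

theorem mk_apply_eq_of_ne {L : Type*} (f : Fin 2 → L) {x y : Fin 2} (h : x ≠ y) :
    s(f x, f y) = s(f 0, f 1) := by
  fin_cases x <;> fin_cases y <;> simp_all [Sym2.eq_swap]

end Sym2

namespace SimpleGraph

variable {V V' W L : Type*}

def closedNeighborSet (G : SimpleGraph V) (v : V) : Set V := {w | w = v ∨ G.Adj v w}

theorem Iso.mem_closedNeighborSet {G : SimpleGraph V} {G' : SimpleGraph V'} (σ : G ≃g G')
    {v w : V} : σ w ∈ G'.closedNeighborSet (σ v) ↔ w ∈ G.closedNeighborSet v := by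
  simp [closedNeighborSet, σ.map_adj_iff]

theorem Iso.existsUnique_adj_iff {G : SimpleGraph V} {G' : SimpleGraph V'} (σ : G ≃g G')
    (v : V) : (∃! w, G'.Adj (σ v) w) ↔ ∃! w, G.Adj v w := by
  rw [← σ.toEquiv.existsUnique_congr_right]
  simp [σ.map_adj_iff]

theorem Iso.closedNeighborSet_eq_iff {G : SimpleGraph V} {G' : SimpleGraph V'} (σ : G ≃g G')
    {v w : V} :
    G'.closedNeighborSet (σ v) = G'.closedNeighborSet (σ w) ↔
      G.closedNeighborSet v = G.closedNeighborSet w := by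
  simp only [Set.ext_iff, σ.surjective.forall, σ.mem_closedNeighborSet]

variable {G : SimpleGraph V} {H : SimpleGraph W}

@[simp]
theorem lexProd_adj {p q : V × W} :
    (lexProd G H).Adj p q ↔ G.Adj p.1 q.1 ∨ (p.1 = q.1 ∧ H.Adj p.2 q.2) :=
  Iff.rfl

theorem closedNeighborSet_lexProd_top (p : V × W) :
    (lexProd G ⊤).closedNeighborSet p = Prod.fst ⁻¹' G.closedNeighborSet p.1 := by
  ext ⟨w, z⟩
  by_cases hw : w = p.1 <;> by_cases hz : z = p.2 <;>
    simp_all [closedNeighborSet, lexProd, Prod.ext_iff, eq_comm]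

def wreathIso (α : G ≃g G) (β : V → H ≃g H) : lexProd G H ≃g lexProd G H where
  toEquiv := Equiv.prodShear α.toEquiv fun a => (β a).toEquiv
  map_rel_iff' := by
    rintro ⟨a, x⟩ ⟨b, y⟩
    change G.Adj (α a) (α b) ∨ (α a = α b ∧ H.Adj (β a x) (β b y)) ↔
      G.Adj a b ∨ (a = b ∧ H.Adj x y)
    rw [α.map_adj_iff, α.injective.eq_iff]
    exact or_congr_right (and_congr_right fun hab => by subst hab; exact (β a).map_adj_iff)

@[simp]
theorem wreathIso_apply (α : G ≃g G) (β : V → H ≃g H) (p : V × W) :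
    wreathIso α β p = (α p.1, β p.1 p.2) :=
  rfl

section TwinFree

variable [Nonempty W]

theorem lexProd_top_fst_apply_eq_iff (hG : Function.Injective G.closedNeighborSet)
    (σ : lexProd G (⊤ : SimpleGraph W) ≃g lexProd G (⊤ : SimpleGraph W)) (p q : V × W) :
    (σ p).1 = (σ q).1 ↔ p.1 = q.1 := by
  have hpre : Function.Injective (Prod.fst ⁻¹' · : Set V → Set (V × W)) :=
    Set.preimage_injective.mpr Prod.fst_surjective
  rw [← hG.eq_iff, ← hG.eq_iff, ← hpre.eq_iff, ← hpre.eq_iff,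
    ← closedNeighborSet_lexProd_top, ← closedNeighborSet_lexProd_top,
    ← closedNeighborSet_lexProd_top, ← closedNeighborSet_lexProd_top, σ.closedNeighborSet_eq_iff]

theorem lexProd_top_exists_iso_fst_apply (hG : Function.Injective G.closedNeighborSet)
    (σ : lexProd G (⊤ : SimpleGraph W) ≃g lexProd G (⊤ : SimpleGraph W)) :
    ∃ α : G ≃g G, ∀ p, (σ p).1 = α p.1 := by
  obtain ⟨w₀⟩ := ‹Nonempty W›
  have hσ := lexProd_top_fst_apply_eq_iff hG σ
  have hσ' := lexProd_top_fst_apply_eq_iff hG σ.symm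
  refine ⟨⟨⟨fun a => (σ (a, w₀)).1, fun a => (σ.symm (a, w₀)).1, fun a => ?_, fun a => ?_⟩,
    @fun a b => ?_⟩, fun p => (hσ _ _).mpr rfl⟩
  · simpa using (hσ' ((σ (a, w₀)).1, w₀) (σ (a, w₀))).mpr rfl
  · simpa using (hσ ((σ.symm (a, w₀)).1, w₀) (σ.symm (a, w₀))).mpr rfl
  · obtain rfl | hab := eq_or_ne a b
    · simp
    have hfst : (σ (a, w₀)).1 ≠ (σ (b, w₀)).1 := (hσ _ _).not.mpr hab
    simpa [hab, hfst] using σ.map_adj_iff (v := (a, w₀)) (w := (b, w₀))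

end TwinFree

def IsDistinguishing (G : SimpleGraph V) (φ : V → L) : Prop :=
  ∀ σ : G ≃g G, (∀ v, φ (σ v) = φ v) → ∀ v, σ v = v

def fiberLabel (φ : V × Fin 2 → L) (a : V) : Sym2 L :=
  s(φ (a, 0), φ (a, 1))

theorem IsDistinguishing.apply_ne {φ : V × Fin 2 → L}
    (h : (lexProd G ⊤).IsDistinguishing φ) (a : V) : φ (a, 0) ≠ φ (a, 1) := by
  classical
  intro ha
  let β : V → (⊤ : SimpleGraph (Fin 2)) ≃g ⊤ := fun b =>
    if b = a then Iso.completeGraph (Equiv.swap 0 1) else Iso.refl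
  have hσ := h (wreathIso Iso.refl β) ?_ (a, 0)
  · simp [β, Iso.completeGraph] at hσ
  · rintro ⟨b, x⟩
    by_cases hb : b = a
    · subst hb
      fin_cases x <;> simp [β, Iso.completeGraph, ha]
    · simp [β, hb]

theorem IsDistinguishing.fiberLabel {φ : V × Fin 2 → L}
    (h : (lexProd G ⊤).IsDistinguishing φ) : G.IsDistinguishing (fiberLabel φ) := by
  intro α hα a
  choose e he using fun b =>
    Sym2.exists_perm_of_mk_eq (f := fun x => φ (b, x)) (g := fun x => φ (α b, x)) (hα b).symm
  exact congrArg Prod.fst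
    (h (wreathIso α fun b => Iso.completeGraph (e b)) (fun p => he p.1 p.2) (a, 0))

theorem isDistinguishing_lexProd_top_iff (hG : Function.Injective G.closedNeighborSet)
    {φ : V × Fin 2 → L} :
    (lexProd G ⊤).IsDistinguishing φ ↔
      (∀ a, φ (a, 0) ≠ φ (a, 1)) ∧ G.IsDistinguishing (fiberLabel φ) := by
  refine ⟨fun h => ⟨h.apply_ne, h.fiberLabel⟩, fun ⟨hne, hψ⟩ σ hσ p => ?_⟩
  obtain ⟨α, hα⟩ := lexProd_top_exists_iso_fst_apply hG σ
  have hσ_apply (a : V) (x : Fin 2) : σ (a, x) = (α a, (σ (a, x)).2) := Prod.ext (hα _) rfl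
  have hfix : ∀ a, α a = a := hψ α fun a => by
    have hsnd : (σ (a, 0)).2 ≠ (σ (a, 1)).2 := fun h => by
      simpa using σ.injective (Prod.ext ((hα (a, 0)).trans (hα (a, 1)).symm) h)
    calc fiberLabel φ (α a)
        = s(φ (α a, (σ (a, 0)).2), φ (α a, (σ (a, 1)).2)) :=
          (Sym2.mk_apply_eq_of_ne (fun x => φ (α a, x)) hsnd).symm
      _ = s(φ (σ (a, 0)), φ (σ (a, 1))) := by rw [← hσ_apply, ← hσ_apply]
      _ = fiberLabel φ a := by rw [hσ, hσ]; rfl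
  obtain ⟨a, x⟩ := p
  have hφ := hσ (a, x)
  rw [hσ_apply, hfix] at hφ
  rw [hσ_apply, hfix, Prod.mk.injEq]
  refine ⟨rfl, ?_⟩
  generalize (σ (a, x)).2 = y at hφ ⊢
  fin_cases x <;> fin_cases y
  all_goals first | rfl | exact absurd hφ (hne a) | exact absurd hφ.symm (hne a)

theorem exists_fiberLabel_iff {P : (V → Sym2 L) → Prop} :
    (∃ φ : V × Fin 2 → L, (∀ a, φ (a, 0) ≠ φ (a, 1)) ∧ P (fiberLabel φ)) ↔
      ∃ ψ : V → Sym2 L, (∀ a, ¬ (ψ a).IsDiag) ∧ P ψ := by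
  constructor
  · rintro ⟨φ, hne, hP⟩
    exact ⟨fiberLabel φ, fun a => Sym2.mk_isDiag_iff.not.mpr (hne a), hP⟩
  · rintro ⟨ψ, hdiag, hP⟩
    let φ : V × Fin 2 → L := fun p => ![(Quot.out (ψ p.1)).1, (Quot.out (ψ p.1)).2] p.2
    have hφ : fiberLabel φ = ψ := funext fun a => Quot.out_eq (ψ a)
    refine ⟨φ, fun a h => hdiag a ?_, hφ ▸ hP⟩
    rw [← hφ]
    exact Sym2.mk_isDiag_iff.mpr h

end SimpleGraph

namespace spider

variable {n : ℕ} {L : Type*}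

abbrev center : Unit ⊕ Fin n ⊕ Fin n := Sum.inl ()

abbrev mid (i : Fin n) : Unit ⊕ Fin n ⊕ Fin n := Sum.inr (Sum.inl i)

abbrev leaf (i : Fin n) : Unit ⊕ Fin n ⊕ Fin n := Sum.inr (Sum.inr i)

theorem adj_leaf_iff {v : Unit ⊕ Fin n ⊕ Fin n} {j : Fin n} :
    (spider n).Adj v (leaf j) ↔ v = mid j := by
  rcases v with ⟨⟩ | i | i <;> simp [spider, eq_comm]

theorem adj_mid_iff {v : Unit ⊕ Fin n ⊕ Fin n} {j : Fin n} :
    (spider n).Adj v (mid j) ↔ v = center ∨ v = leaf j := by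
  rcases v with ⟨⟩ | i | i <;> simp [spider, eq_comm]

theorem closedNeighborSet_injective : Function.Injective (spider n).closedNeighborSet := by
  rintro (⟨⟩ | i | i) (⟨⟩ | j | j) h <;> simp only [Set.ext_iff, closedNeighborSet] at h
  · rfl
  · simpa [spider] using h (leaf j)
  · simpa [spider] using h center
  · simpa [spider] using h (leaf i)
  · simpa [spider] using h (leaf i)
  · simpa [spider] using h center
  · simpa [spider] using h center
  · simpa [spider] using h center
  · simpa [spider] using h (leaf i)

theorem existsUnique_adj_iff (hn : 2 ≤ n) (v : Unit ⊕ Fin n ⊕ Fin n) :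
    (∃! w, (spider n).Adj v w) ↔ ∃ i, v = leaf i := by
  refine ⟨fun h => ?_, ?_⟩
  · rcases v with ⟨⟩ | i | i
    · have := h.unique (y₁ := mid ⟨0, by omega⟩) (y₂ := mid ⟨1, by omega⟩)
        (by simp [spider]) (by simp [spider])
      simp at this
    · have := h.unique (y₁ := center) (y₂ := leaf i) (by simp [spider]) (by simp [spider])
      simp at this
    · exact ⟨i, rfl⟩
  · rintro ⟨i, rfl⟩
    refine ⟨mid i, by simp [spider], fun w hw => ?_⟩
    exact adj_leaf_iff.mp (Adj.symm hw)

theorem iso_apply (hn : 2 ≤ n) (α : spider n ≃g spider n) :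
    α center = center ∧ ∀ i, ∃ j, α (mid i) = mid j ∧ α (leaf i) = leaf j := by
  have hleaf (v) : (∃ i, α v = leaf i) ↔ ∃ i, v = leaf i := by
    rw [← existsUnique_adj_iff hn, ← existsUnique_adj_iff hn, α.existsUnique_adj_iff]
  have hleg (i) : ∃ j, α (mid i) = mid j ∧ α (leaf i) = leaf j := by
    obtain ⟨j, hj⟩ := (hleaf (leaf i)).mpr ⟨i, rfl⟩
    refine ⟨j, adj_leaf_iff.mp ?_, hj⟩
    rw [← hj, α.map_adj_iff]
    simp [spider]
  refine ⟨?_, hleg⟩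
  obtain ⟨j, hj, -⟩ := hleg ⟨0, by omega⟩
  have hadj : (spider n).Adj (α center) (mid j) := by
    rw [← hj, α.map_adj_iff]
    simp [spider]
  refine (adj_mid_iff.mp hadj).resolve_right fun h => ?_
  simpa using (hleaf center).mp ⟨j, h⟩

def legIso (π : Equiv.Perm (Fin n)) : spider n ≃g spider n where
  toEquiv := Equiv.sumCongr (Equiv.refl Unit) (Equiv.sumCongr π π)
  map_rel_iff' := by
    rintro (⟨⟩ | i | i) (⟨⟩ | j | j) <;> simp [spider]

@[simp] theorem legIso_mid (π : Equiv.Perm (Fin n)) (i : Fin n) :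
    legIso π (mid i) = mid (π i) := rfl

@[simp] theorem legIso_leaf (π : Equiv.Perm (Fin n)) (i : Fin n) :
    legIso π (leaf i) = leaf (π i) := rfl

theorem isDistinguishing_iff (hn : 2 ≤ n) {ψ : Unit ⊕ Fin n ⊕ Fin n → L} :
    (spider n).IsDistinguishing ψ ↔ Function.Injective fun i => (ψ (mid i), ψ (leaf i)) := by
  constructor
  · intro h i j hij
    simp only [Prod.mk.injEq] at hij
    have hσ : ∀ v, ψ (legIso (Equiv.swap i j) v) = ψ v := by
      rintro (⟨⟩ | k | k)
      · rfl
      all_goals simp only [legIso_mid, legIso_leaf, Equiv.swap_apply_def]; split_ifs <;> simp_all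
    simpa using (h _ hσ (mid i)).symm
  · intro hinj α hα v
    obtain ⟨hc, hlegs⟩ := iso_apply hn α
    have hfix (i) : α (mid i) = mid i ∧ α (leaf i) = leaf i := by
      obtain ⟨j, hm, hl⟩ := hlegs i
      obtain rfl : j = i := hinj (by simp only [← hm, ← hl, hα])
      exact ⟨hm, hl⟩
    rcases v with ⟨⟩ | i | i
    exacts [hc, (hfix i).1, (hfix i).2]

theorem exists_injective_legLabel_iff (hn : 1 ≤ n) (d : ℕ) :
    (∃ ψ : Unit ⊕ Fin n ⊕ Fin n → Sym2 (Fin d), (∀ a, ¬ (ψ a).IsDiag) ∧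
      Function.Injective fun i => (ψ (mid i), ψ (leaf i))) ↔ n ≤ (d * (d - 1) / 2) ^ 2 := by
  let S := {z : Sym2 (Fin d) // ¬ z.IsDiag}
  have hcard : Fintype.card (S × S) = (d * (d - 1) / 2) ^ 2 := by
    rw [Fintype.card_prod, Sym2.card_subtype_not_diag, Fintype.card_fin, Nat.choose_two_right, sq]
  constructor
  · rintro ⟨ψ, hdiag, hinj⟩
    have := Fintype.card_le_of_injective
      (fun i => ((⟨ψ (mid i), hdiag _⟩, ⟨ψ (leaf i), hdiag _⟩) : S × S))
      (fun i j h => hinj (by simpa [S] using h))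
    simpa [hcard] using this
  · intro hle
    obtain ⟨u⟩ := Function.Embedding.nonempty_of_card_le (α := Fin n) (β := S × S)
      (by simpa [hcard] using hle)
    let ψ : Unit ⊕ Fin n ⊕ Fin n → S :=
      Sum.elim (fun _ => (u ⟨0, hn⟩).1) (Sum.elim (fun i => (u i).1) (fun i => (u i).2))
    refine ⟨fun v => ψ v, fun v => (ψ v).2, fun i j h => u.injective ?_⟩
    simp only [Prod.mk.injEq] at h
    exact Prod.ext (Subtype.ext h.1) (Subtype.ext h.2)

end spider

theorem stmt4 (n : ℕ) (hn : 3 ≤ n) :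
    distinguishingNumber (lexProd (spider n) (⊤ : SimpleGraph (Fin 2))) =
      sInf {r : ℕ | n ≤ (r * (r - 1) / 2) ^ 2} := by
  unfold distinguishingNumber
  congr 1
  ext d
  change (∃ φ, (lexProd (spider n) ⊤).IsDistinguishing φ) ↔ _
  simp only [isDistinguishing_lexProd_top_iff spider.closedNeighborSet_injective,
    spider.isDistinguishing_iff (by omega : 2 ≤ n)]
  exact exists_fiberLabel_iff.trans (spider.exists_injective_legLabel_iff (by omega) d)
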